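/- Let n, m ≥ 1 be integers and let S be a digitally convex set of K_n □ K_m. If (a,b) ∈ S and (c,d) ∈ S, then (a,d) ∈ S and (c,b) ∈ S. -/
import Mathlib


open SimpleGraph

/-- `N[S]`: the union of closed neighbourhoods of the vertices of `S`. -/
def closedNbhd {V : Type*} (G : SimpleGraph V) (S : Set V) : Set V :=
  ⋃ v ∈ S, insert v (G.neighborSet v)

/-- A set `S` is digitally convex in `G` if every vertex `v` with `N[v] ⊆ N[S]`
belongs to `S`. -/
def DigConvex {V : Type*} (G : SimpleGraph V) (S : Set V) : Prop :=
  ∀ v : V, insert v (G.neighborSet v) ⊆ closedNbhd G S → v ∈ S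

/-- `n_D(G)`: the number of digitally convex sets of `G`. -/
noncomputable def nD {V : Type*} (G : SimpleGraph V) : ℕ :=
  Nat.card {S : Set V // DigConvex G S}

private lemma mem_closed_of_coord {n m : ℕ} (p q : Fin n × Fin m)
    (h : p.1 = q.1 ∨ p.2 = q.2) :
    p ∈ insert q (((⊤ : SimpleGraph (Fin n)) □ (⊤ : SimpleGraph (Fin m))).neighborSet q) := by
  by_cases hpq : p = q
  · exact (hpq ▸ Set.mem_insert p _)
  · refine Set.mem_insert_of_mem _ ?_
    simp only [SimpleGraph.mem_neighborSet, SimpleGraph.boxProd_adj, SimpleGraph.top_adj]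
    rcases h with h1 | h2
    · right
      refine ⟨?_, h1.symm⟩
      intro h2
      exact hpq (Prod.ext h1 h2.symm)
    · left
      refine ⟨?_, h2.symm⟩
      intro h1
      exact hpq (Prod.ext h1.symm h2)

private lemma key {n m : ℕ} (S : Set (Fin n × Fin m))
    (hS : DigConvex ((⊤ : SimpleGraph (Fin n)) □ (⊤ : SimpleGraph (Fin m))) S)
    (a c : Fin n) (b d : Fin m) (hab : (a, b) ∈ S) (hcd : (c, d) ∈ S) :
    (a, d) ∈ S := by
  apply hS
  intro v hv
  have hcoord : v.1 = a ∨ v.2 = d := by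
    rcases Set.mem_insert_iff.mp hv with h | h
    · left; rw [h]
    · simp only [SimpleGraph.mem_neighborSet, SimpleGraph.boxProd_adj,
        SimpleGraph.top_adj] at h
      rcases h with ⟨_, h⟩ | ⟨_, h⟩
      · right; exact h.symm
      · left; exact h.symm
  rcases hcoord with h | h
  · exact Set.mem_biUnion hab (mem_closed_of_coord v (a, b) (Or.inl h))
  · exact Set.mem_biUnion hcd (mem_closed_of_coord v (c, d) (Or.inr h))

/-- If `S` is digitally convex in `K_n □ K_m` and `(a,b), (c,d) ∈ S`, then
`(a,d) ∈ S` and `(c,b) ∈ S`. -/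
theorem digConvex_complete_boxProd_swap (n m : ℕ) (hn : 1 ≤ n) (hm : 1 ≤ m)
    (S : Set (Fin n × Fin m))
    (hS : DigConvex ((⊤ : SimpleGraph (Fin n)) □ (⊤ : SimpleGraph (Fin m))) S)
    (a c : Fin n) (b d : Fin m) (hab : (a, b) ∈ S) (hcd : (c, d) ∈ S) :
    (a, d) ∈ S ∧ (c, b) ∈ S :=
  ⟨key S hS a c b d hab hcd, key S hS c a d b hcd hab⟩
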